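/- If R is a Gelfand G-graded commutative ring, then GMax(R) with the Zariski topology is a Hausdorff space. -/

import Mathlib

/-!
Given distinct graded maximal ideals `M ≠ N`, the products `s * t` of homogeneous `s ∉ M` and
`t ∉ N` form a multiplicative set. If it avoided `0`, a graded ideal maximal among those
avoiding it would be a homogeneous prime contained in both `M` and `N`, contradicting the
Gelfand property. So some such product vanishes, and the basic open sets `D(s)` and `D(t)`
separate `M` from `N`, since every homogeneous prime contains `s * t = 0`.
-/

section GradedGelfand

variable {G : Type*} [AddGroup G] [DecidableEq G] {R : Type*} [CommRing R]
variable (𝒜 : G → AddSubgroup R) [GradedRing 𝒜]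

/-- A homogeneous (graded) prime ideal: a proper graded ideal that is prime
with respect to homogeneous elements. -/
def IsGradedPrime (P : Ideal R) : Prop :=
  P.IsHomogeneous 𝒜 ∧ P ≠ ⊤ ∧
    ∀ a b : R, SetLike.IsHomogeneousElem 𝒜 a → SetLike.IsHomogeneousElem 𝒜 b →
      a * b ∈ P → a ∈ P ∨ b ∈ P

/-- A graded maximal ideal: a proper graded ideal maximal among proper graded ideals. -/
def IsGradedMaximal (M : Ideal R) : Prop :=
  M.IsHomogeneous 𝒜 ∧ M ≠ ⊤ ∧
    ∀ J : Ideal R, J.IsHomogeneous 𝒜 → M ≤ J → J ≠ ⊤ → J = M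

/-- The homogeneous prime spectrum of a graded ring. -/
def GSpec := { P : Ideal R // IsGradedPrime 𝒜 P }

/-- The Zariski topology on the homogeneous prime spectrum, generated by the basic
open sets `D_G(r)` for homogeneous `r`; the closed sets are exactly the `V_G(I)`
for graded ideals `I`. -/
instance : TopologicalSpace (GSpec 𝒜) :=
  TopologicalSpace.generateFrom
    { U | ∃ r : R, SetLike.IsHomogeneousElem 𝒜 r ∧ U = { P : GSpec 𝒜 | r ∉ P.1 } }

/-- The set of graded maximal ideals inside the homogeneous prime spectrum. -/
def GMax : Set (GSpec 𝒜) := { P | IsGradedMaximal 𝒜 P.1 }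

/-- A Gelfand graded ring: every homogeneous prime ideal is contained in a unique
graded maximal ideal. -/
def IsGelfandGraded : Prop :=
  ∀ P : Ideal R, IsGradedPrime 𝒜 P →
    ∃! M : Ideal R, IsGradedMaximal 𝒜 M ∧ P ≤ M

/-- A pm⁺ graded ring: for every homogeneous prime `P`, the homogeneous primes
containing `P` form a chain. -/
def IsPMPlusGraded : Prop :=
  ∀ P Q Q' : Ideal R, IsGradedPrime 𝒜 P → IsGradedPrime 𝒜 Q → IsGradedPrime 𝒜 Q' →
    P ≤ Q → P ≤ Q' → Q ≤ Q' ∨ Q' ≤ Q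

end GradedGelfand

section GradedGelfandHausdorff

variable {G : Type*} [AddGroup G] [DecidableEq G] {R : Type*} [CommRing R]
variable {𝒜 : G → AddSubgroup R} [GradedRing 𝒜]

theorem Ideal.IsHomogeneous.le_of_forall_homogeneous_mem {P Q : Ideal R}
    (hP : P.IsHomogeneous 𝒜) (hPQ : ∀ x, SetLike.IsHomogeneousElem 𝒜 x → x ∈ P → x ∈ Q) :
    P ≤ Q := by
  rw [← hP.toIdeal_homogeneousCore_eq_self]
  exact Ideal.span_le.2 fun _ ⟨⟨x, hx⟩, hxP, e⟩ => e ▸ hPQ x hx hxP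

theorem isGradedPrime_of_maximally_disjoint {P : Ideal R} (S : Submonoid R)
    (hP : P.IsHomogeneous 𝒜) (hPS : Disjoint (P : Set R) S)
    (hmax : ∀ J : Ideal R, J.IsHomogeneous 𝒜 → P < J → ¬Disjoint (J : Set R) S) :
    IsGradedPrime 𝒜 P := by
  refine ⟨hP, fun hPtop => Set.disjoint_left.mp hPS (hPtop ▸ Submodule.mem_top) S.one_mem,
    fun a b ha hb hab => ?_⟩
  by_contra! hnot
  have hspan {x : R} (hx : SetLike.IsHomogeneousElem 𝒜 x) :
      (P ⊔ Ideal.span {x}).IsHomogeneous 𝒜 :=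
    hP.sup (Ideal.homogeneous_span 𝒜 {x} fun _ e => e ▸ hx)
  have hSa := hmax _ (hspan ha) (Submodule.lt_sup_iff_notMem.mpr hnot.1)
  have hSb := hmax _ (hspan hb) (Submodule.lt_sup_iff_notMem.mpr hnot.2)
  simp only [Set.not_disjoint_iff, SetLike.mem_coe, Submodule.mem_sup,
    Ideal.mem_span_singleton'] at hSa hSb
  obtain ⟨s, ⟨p, hp, _, ⟨r, rfl⟩, rfl⟩, hs⟩ := hSa
  obtain ⟨t, ⟨q, hq, _, ⟨r', rfl⟩, rfl⟩, ht⟩ := hSb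
  have hst : (p + r * a) * (q + r' * b) ∈ P := by
    rw [show (p + r * a) * (q + r' * b) = p * (q + r' * b) + (r * a) * q + (r * r') * (a * b) by
      ring]
    exact P.add_mem (P.add_mem (P.mul_mem_right _ hp) (P.mul_mem_left _ hq)) (P.mul_mem_left _ hab)
  exact Set.disjoint_left.mp hPS hst (S.mul_mem hs ht)

theorem IsGradedMaximal.isGradedPrime {M : Ideal R} (hM : IsGradedMaximal 𝒜 M) :
    IsGradedPrime 𝒜 M := by
  obtain ⟨hhom, hne, hmax⟩ := hM
  refine isGradedPrime_of_maximally_disjoint ⊥ hhom ?_ fun J hJ hMJ hJS => ?_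
  · simpa [Submonoid.coe_bot] using M.ne_top_iff_one.mp hne
  · have hJtop : J = ⊤ := by_contra fun hJ' => hMJ.ne (hmax J hJ hMJ.le hJ').symm
    simp [hJtop, Submonoid.coe_bot] at hJS

theorem exists_le_isGradedPrime_disjoint (S : Submonoid R) {I : Ideal R}
    (hI : I.IsHomogeneous 𝒜) (hIS : Disjoint (I : Set R) S) :
    ∃ P : Ideal R, IsGradedPrime 𝒜 P ∧ I ≤ P ∧ Disjoint (P : Set R) S := by
  obtain ⟨P, hIP, hP⟩ := zorn_le_nonempty₀
    {J : Ideal R | J.IsHomogeneous 𝒜 ∧ Disjoint (J : Set R) S}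
    (fun c hc hchain J hJ => by
      refine ⟨sSup c, ⟨Ideal.IsHomogeneous.sSup fun K hK => (hc hK).1,
        Set.disjoint_left.mpr fun x hx => ?_⟩, fun _ => le_sSup⟩
      obtain ⟨K, hKc, hxK⟩ := (Submodule.mem_sSup_of_directed ⟨J, hJ⟩ hchain.directedOn).mp hx
      exact Set.disjoint_left.mp (hc hKc).2 hxK)
    I ⟨hI, hIS⟩
  exact ⟨P, isGradedPrime_of_maximally_disjoint S hP.1.1 hP.1.2
    fun J hJ hPJ hJS => hP.not_prop_of_gt hPJ ⟨hJ, hJS⟩, hIP, hP.1.2⟩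

def IsGradedPrime.homogeneousCompl {P : Ideal R} (hP : IsGradedPrime 𝒜 P) : Submonoid R where
  carrier := {s | SetLike.IsHomogeneousElem 𝒜 s ∧ s ∉ P}
  one_mem' := ⟨SetLike.isHomogeneousElem_one 𝒜, P.ne_top_iff_one.mp hP.2.1⟩
  mul_mem' {s t} hs ht := ⟨hs.1.mul ht.1, fun hst => (hP.2.2 s t hs.1 ht.1 hst).elim hs.2 ht.2⟩

theorem IsGelfandGraded.exists_mul_eq_zero (h : IsGelfandGraded 𝒜) {M N : Ideal R}
    (hM : IsGradedMaximal 𝒜 M) (hN : IsGradedMaximal 𝒜 N) (hMN : M ≠ N) :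
    ∃ a b : R, SetLike.IsHomogeneousElem 𝒜 a ∧ SetLike.IsHomogeneousElem 𝒜 b ∧
      a ∉ M ∧ b ∉ N ∧ a * b = 0 := by
  set S := hM.isGradedPrime.homogeneousCompl ⊔ hN.isGradedPrime.homogeneousCompl
  by_cases h0 : (0 : R) ∈ S
  · obtain ⟨a, ha, b, hb, hab⟩ := Submonoid.mem_sup.mp h0
    exact ⟨a, b, ha.1, hb.1, ha.2, hb.2, hab⟩
  obtain ⟨P, hP, -, hPS⟩ := exists_le_isGradedPrime_disjoint S (Ideal.IsHomogeneous.bot 𝒜)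
    (by simpa using h0)
  have hPM : P ≤ M := hP.1.le_of_forall_homogeneous_mem fun x hx hxP => by_contra fun hxM =>
    Set.disjoint_left.mp hPS hxP (Submonoid.mem_sup.mpr
      ⟨x, ⟨hx, hxM⟩, 1, hN.isGradedPrime.homogeneousCompl.one_mem, mul_one x⟩)
  have hPN : P ≤ N := hP.1.le_of_forall_homogeneous_mem fun x hx hxP => by_contra fun hxN =>
    Set.disjoint_left.mp hPS hxP (Submonoid.mem_sup.mpr
      ⟨1, hM.isGradedPrime.homogeneousCompl.one_mem, x, ⟨hx, hxN⟩, one_mul x⟩)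
  exact absurd ((h P hP).unique ⟨hM, hPM⟩ ⟨hN, hPN⟩) hMN

theorem GSpec.isOpen_setOf_notMem {a : R} (ha : SetLike.IsHomogeneousElem 𝒜 a) :
    IsOpen {P : GSpec 𝒜 | a ∉ P.1} :=
  TopologicalSpace.GenerateOpen.basic _ ⟨a, ha, rfl⟩

end GradedGelfandHausdorff

section Statements

variable {G : Type*} [AddGroup G] [DecidableEq G] {R : Type*} [CommRing R]
variable (𝒜 : G → AddSubgroup R) [GradedRing 𝒜]

theorem stmt_7 (h : IsGelfandGraded 𝒜) :
    T2Space (GMax 𝒜 : Set (GSpec 𝒜)) := by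
  refine ⟨fun x y hxy => ?_⟩
  obtain ⟨a, b, ha, hb, hax, hby, hab⟩ :=
    h.exists_mul_eq_zero x.2 y.2 fun e => hxy (Subtype.ext (Subtype.ext e))
  refine ⟨Subtype.val ⁻¹' {P | a ∉ P.1}, Subtype.val ⁻¹' {P | b ∉ P.1},
    (GSpec.isOpen_setOf_notMem ha).preimage continuous_subtype_val,
    (GSpec.isOpen_setOf_notMem hb).preimage continuous_subtype_val, hax, hby,
    Set.disjoint_left.mpr fun z hza hzb => ?_⟩
  exact ((IsGradedMaximal.isGradedPrime z.2).2.2 a b ha hb (hab ▸ z.1.1.zero_mem)).elim hza hzb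
end Statements
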